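/- For every n ∈ ℕ, every open subset U ⊆ K^n, and every K-analytic map f : U → K with f(U) ⊆ 𝔽[[X^ℓ]], the map f is locally constant. (Thus 𝔽[[X^ℓ]] is a constancy-enforcing subset of K.) -/

import Mathlib

/- CONTEXT: `p` a prime, `𝔽 = ZMod p` the field with `p` elements, `ℓ ≥ 2` coprime to `p`,
`K = 𝔽((X))` (realized as `LaurentSeries (ZMod p)`) with its X-adic absolute value and
valuation topology.  `K^n = Fin n → K` carries the product (= maximum-norm) topology.
`𝔽[[X^ℓ]] = {∑_{k=0}^∞ a_k X^{ℓk} : (a_k) ∈ 𝔽^ℕ}`, i.e. the Laurent series supported on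
`ℓℕ`.  A map `f : U → K` on an open `U ⊆ K^n` is `K`-analytic if around every point it is
given by a convergent power series in `n` variables (sum of the net of finite partial
sums, i.e. `HasSum`). -/

set_option maxHeartbeats 1600000

noncomputable section

open Filter Topology

variable (p : ℕ) [Fact p.Prime]

/-- `𝔽[[X^ℓ]] = {∑_{k=0}^∞ a_k X^{ℓk} : (a_k) ∈ 𝔽^ℕ}`. -/
def powerSeriesInXl (ℓ : ℕ) : Set (LaurentSeries (ZMod p)) :=
  {z | ∀ j : ℤ, z.coeff j ≠ 0 → ∃ k : ℕ, j = ℓ * k}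

/-- `f : U → K`, `U ⊆ K^n` open, is `K`-analytic: around every point `z₀ ∈ U` it is given
by a convergent power series `∑_α a_α (z - z₀)^α` (multi-index notation). -/
def AnalyticOnOpen (n : ℕ) (U : Set (Fin n → LaurentSeries (ZMod p)))
    (f : (Fin n → LaurentSeries (ZMod p)) → LaurentSeries (ZMod p)) : Prop :=
  ∀ z₀ ∈ U, ∃ (a : (Fin n → ℕ) → LaurentSeries (ZMod p))
      (t : Set (Fin n → LaurentSeries (ZMod p))),
    IsOpen t ∧ z₀ ∈ t ∧ t ⊆ U ∧
      ∀ z ∈ t, HasSum (fun α : Fin n → ℕ =>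
        a α * ∏ i, (z i - z₀ i) ^ α i) (f z)

namespace AuxPSXl

local notation "K" => LaurentSeries (ZMod p)

def coeffHom (j : ℤ) : LaurentSeries (ZMod p) →+ ZMod p where
  toFun x := x.coeff j
  map_zero' := rfl
  map_add' _ _ := by simp

lemma continuous_coeffHom (j : ℤ) : Continuous (coeffHom p j) := by
  apply continuous_of_continuousAt_zero
  have h0 : {x : K | x.coeff j = 0} ∈ nhds (0 : K) := by
    rw [Valued.mem_nhds_zero]
    refine ⟨Units.mk0 (Valued.v.restrict (HahnSeries.single (j+1) (1:ZMod p) : K))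
      (by rw [← pos_iff_ne_zero, Valuation.restrict_pos_iff, LaurentSeries.valuation_single_zpow]
          exact WithZero.exp_pos), fun x hx => ?_⟩
    have hx' := (Valuation.restrict_lt_iff _).mp hx
    rw [LaurentSeries.valuation_single_zpow] at hx'
    exact LaurentSeries.coeff_zero_of_lt_valuation _ (D := j+1) (le_of_lt hx') (by omega)
  have hev : (coeffHom p j) =ᶠ[nhds (0:K)] (fun _ => 0) :=
    Filter.eventually_of_mem h0 (fun x hx => hx)
  rw [ContinuousAt, map_zero]
  exact Filter.Tendsto.congr' hev.symm tendsto_const_nhds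

lemma hasSum_coeff {ι : Type*} {g : ι → LaurentSeries (ZMod p)} {y : LaurentSeries (ZMod p)}
    (h : HasSum g y) (j : ℤ) : HasSum (fun i => (g i).coeff j) (y.coeff j) := by
  exact h.map (coeffHom p j) (continuous_coeffHom p j)

lemma coeff_mul_single (x : K) (m : ℤ) (c : ZMod p) (j : ℤ) :
    (x * HahnSeries.single m c).coeff j = x.coeff (j - m) * c := by
  have := HahnSeries.coeff_mul_single_add (r := c) (x := x) (a := j - m) (b := m)
  rwa [sub_add_cancel] at this

lemma le_ofAdd_of_lt_ofAdd {x : WithZero (Multiplicative ℤ)} {m : ℤ}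
    (h : x < ((Multiplicative.ofAdd m : Multiplicative ℤ) : WithZero (Multiplicative ℤ))) :
    x ≤ ((Multiplicative.ofAdd (m-1) : Multiplicative ℤ) : WithZero (Multiplicative ℤ)) := by
  rcases eq_or_ne x 0 with rfl | hx
  · exact zero_le'
  · obtain ⟨y, rfl⟩ := WithZero.ne_zero_iff_exists.mp hx
    rw [WithZero.coe_lt_coe] at h
    rw [WithZero.coe_le_coe]
    rw [← ofAdd_toAdd y] at h ⊢
    rw [Multiplicative.ofAdd_lt] at h
    rw [Multiplicative.ofAdd_le]
    omega

lemma one_add_single_ne_zero (c : ZMod p) : (1 + HahnSeries.single (1:ℤ) c : K) ≠ 0 := by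
  intro h
  have h0 : (1 + HahnSeries.single (1:ℤ) c : K).coeff 0 = 1 := by
    simp [HahnSeries.coeff_single]
  rw [h] at h0
  simp at h0

lemma order_one_add_single (c : ZMod p) : (1 + HahnSeries.single (1:ℤ) c : K).order = 0 := by
  have h0 : (1 + HahnSeries.single (1:ℤ) c : K).coeff 0 = 1 := by
    simp [HahnSeries.coeff_single]
  refine le_antisymm (HahnSeries.order_le_of_coeff_ne_zero (by rw [h0]; exact one_ne_zero)) ?_
  by_contra hlt
  push_neg at hlt
  have hne := one_add_single_ne_zero p c
  apply HahnSeries.coeff_order_eq_zero.not.2 hne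
  have h1 : (1 + HahnSeries.single (1:ℤ) c : K).order ≠ 0 := ne_of_lt hlt
  have h2 : (1 + HahnSeries.single (1:ℤ) c : K).order ≠ 1 := by
    intro h; rw [h] at hlt; omega
  simp [HahnSeries.coeff_single, HahnSeries.coeff_one, h1, h2]

lemma val_one_add_single_le (c : ZMod p) :
    Valued.v (1 + HahnSeries.single (1:ℤ) c : K) ≤ 1 := by
  have h : Valued.v (1 + HahnSeries.single (1:ℤ) c : K) ≤
      ((Multiplicative.ofAdd (-(0:ℤ)) : Multiplicative ℤ) : WithZero (Multiplicative ℤ)) := by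
    rw [← WithZero.exp_eq_coe_ofAdd, LaurentSeries.valuation_le_iff_coeff_lt_eq_zero]
    intro n hn
    have h1 : n ≠ 0 := by omega
    have h2 : n ≠ 1 := by omega
    simp [HahnSeries.coeff_single, HahnSeries.coeff_one, h1, h2]
  simpa using h

lemma core (ℓ : ℕ) (hℓ : 2 ≤ ℓ) (hcop : Nat.Coprime p ℓ) (b : ℕ → LaurentSeries (ZMod p))
    (hb0 : b 0 = 0)
    (hV : ∀ s : LaurentSeries (ZMod p), Valued.v s ≤ (1 : WithZero (Multiplicative ℤ)) →
      ∃ y : LaurentSeries (ZMod p), (∀ j : ℤ, y.coeff j ≠ 0 → (ℓ:ℤ) ∣ j) ∧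
        HasSum (fun d => b d * s ^ d) y) :
    ∀ d, b d = 0 := by
  classical
  have hp : p.Prime := Fact.out
  haveI : CharP K p := charP_of_injective_ringHom (HahnSeries.C_injective ..) p
  haveI : ExpChar K p := ExpChar.prime hp
  by_contra hcon
  push_neg at hcon
  obtain ⟨d₀, hd₀⟩ := hcon
  have hex : ∃ d, b d ≠ 0 := ⟨d₀, hd₀⟩
  set k₀ := Nat.find hex with hk₀def
  have hbk : b k₀ ≠ 0 := Nat.find_spec hex
  have hmin : ∀ d, d < k₀ → b d = 0 := fun d hd => not_not.mp (Nat.find_min hex hd)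
  have hk₀pos : k₀ ≠ 0 := fun h => hbk (by rw [h, hb0])
  -- the convergence bound C
  set X : K := HahnSeries.single (1:ℤ) (1 : ZMod p) with hX
  have hXd : ∀ d : ℕ, X ^ d = HahnSeries.single ((d:ℤ)) (1:ZMod p) := by
    intro d
    rw [hX, HahnSeries.single_pow, one_pow]
    congr 1
    simp [nsmul_eq_mul]
  have hXv : Valued.v X ≤ (1 : WithZero (Multiplicative ℤ)) := by
    rw [hX, LaurentSeries.valuation_single_zpow]
    rw [← WithZero.coe_one, ← ofAdd_zero, ← WithZero.exp_eq_coe_ofAdd, WithZero.exp_le_exp]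
    omega
  obtain ⟨y₁, _, hy₁⟩ := hV X hXv
  have hnb : {x : K | Valued.v x < 1} ∈ nhds (0:K) := by
    rw [Valued.mem_nhds_zero]
    exact ⟨1, by simp⟩
  have hev : ∀ᶠ d in Filter.cofinite, Valued.v (b d * X ^ d) < 1 :=
    (hy₁.summable.tendsto_cofinite_zero).eventually (Filter.eventually_of_mem hnb (fun x hx => hx))
  have hfin : {d : ℕ | ¬ Valued.v (b d * X ^ d) < 1}.Finite := Filter.eventually_cofinite.mp hev
  set S : Finset ℤ := insert (1:ℤ)
    ((hfin.toFinset.filter (fun d => b d ≠ 0)).image (fun d => (b d).order + (d:ℤ))) with hS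
  set C : ℤ := S.min' (Finset.insert_nonempty _ _) with hCdef
  have hC1 : C ≤ 1 := Finset.min'_le _ _ (Finset.mem_insert_self _ _)
  have hC : ∀ d : ℕ, ∀ j : ℤ, j < C - (d:ℤ) → (b d).coeff j = 0 := by
    intro d j hj
    by_cases hbd : b d = 0
    · simp [hbd]
    by_cases hdE : d ∈ hfin.toFinset
    · have hmem : (b d).order + (d:ℤ) ∈ S :=
        Finset.mem_insert_of_mem (Finset.mem_image_of_mem _ (Finset.mem_filter.mpr ⟨hdE, hbd⟩))
      have hle : C ≤ (b d).order + d := Finset.min'_le _ _ hmem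
      exact HahnSeries.coeff_eq_zero_of_lt_order (by omega)
    · have hv : Valued.v (b d * X ^ d) < 1 := by
        by_contra hvv
        exact hdE (hfin.mem_toFinset.mpr hvv)
      have hv' := le_ofAdd_of_lt_ofAdd (m := 0) (x := Valued.v (b d * X ^ d)) (by simpa using hv)
      have h0 : (b d * X ^ d).coeff (j + d) = 0 := by
        refine LaurentSeries.coeff_zero_of_lt_valuation (ZMod p) (D := 1) ?_ (by omega)
        rw [← WithZero.exp_eq_coe_ofAdd] at hv'
        simpa using hv'
      rw [hXd, coeff_mul_single] at h0
      simpa using h0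
  have horder : ∀ d : ℕ, b d ≠ 0 → C - (d:ℤ) ≤ (b d).order := by
    intro d hbd
    by_contra h
    push_neg at h
    exact HahnSeries.coeff_order_eq_zero.not.2 hbd (hC d _ h)
  -- leading data
  set v₀ : ℤ := (b k₀).order with hv₀
  set lam : ZMod p := (b k₀).coeff v₀ with hlam'
  have hlam : lam ≠ 0 := HahnSeries.coeff_order_eq_zero.not.2 hbk
  set e : ℕ := k₀.factorization p with he
  have hpe1 : 1 ≤ p ^ e := Nat.one_le_pow _ _ hp.pos
  set u : ℕ := k₀ / p ^ e with hu'
  have hpu : p ^ e * u = k₀ := by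
    rw [hu', he]; exact Nat.ordProj_mul_ordCompl_eq_self k₀ p
  have hu : ¬ p ∣ u := by
    rw [hu', he]; exact Nat.not_dvd_ordCompl hp hk₀pos
  have hu1 : 1 ≤ u := by
    rcases Nat.eq_zero_or_pos u with h | h
    · rw [h, mul_zero] at hpu; omega
    · exact h
  -- the large exponent a
  set a : ℕ := (v₀ + (p^e : ℕ) - C).toNat + k₀ + 2 with ha'
  have haInt : (v₀ + ((p^e : ℕ) : ℤ) - C) + (k₀ : ℤ) + 2 ≤ (a : ℤ) := by
    rw [ha']
    push_cast
    have := Int.self_le_toNat (v₀ + ((p^e : ℕ) : ℤ) - C)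
    omega
  have ha1 : 1 ≤ a := by omega
  have hagrow : ∀ d : ℕ, k₀ < d → (v₀ + (a:ℤ)*k₀ + (p^e:ℕ)) < C - (d:ℤ) + (a:ℤ)*(d:ℤ) := by
    intro d hd
    have h1 : (1:ℤ) ≤ (d:ℤ) - (k₀:ℤ) := by
      have : (k₀:ℤ) < (d:ℤ) := by exact_mod_cast hd
      omega
    have h2 : ((a:ℤ) - 1) ≤ ((a:ℤ) - 1) * ((d:ℤ) - (k₀:ℤ)) := by
      refine le_mul_of_one_le_right ?_ h1
      have : (1:ℤ) ≤ (a:ℤ) := by exact_mod_cast ha1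
      omega
    nlinarith [haInt]
  -- the key coefficient computation
  have key : ∀ (c : ZMod p) (r : ℕ), r ≤ 1 →
      ∃ y : K, (∀ j : ℤ, y.coeff j ≠ 0 → (ℓ:ℤ) ∣ j) ∧
        y.coeff (v₀ + (a:ℤ)*k₀ + (p^e:ℕ)*r) =
          ∑ m ∈ Finset.range (r+1),
            (b k₀).coeff (v₀ + ((p^e:ℕ):ℤ)*r - ((p^e:ℕ):ℤ)*m) *
              ((c^(p^e))^m * (u.choose m : ZMod p)) := by
    intro c r hr
    set s : K := HahnSeries.single ((a:ℕ):ℤ) 1 * (1 + HahnSeries.single (1:ℤ) c) with hs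
    have hne1 : (HahnSeries.single ((a:ℕ):ℤ) (1:ZMod p)) ≠ 0 :=
      HahnSeries.single_ne_zero one_ne_zero
    have hne2 := one_add_single_ne_zero p c
    have hsne : s ≠ 0 := mul_ne_zero hne1 hne2
    have hsord : s.order = (a:ℤ) := by
      rw [hs, HahnSeries.order_mul hne1 hne2, HahnSeries.order_single one_ne_zero,
        order_one_add_single, add_zero]
    have hsv : Valued.v s ≤ (1 : WithZero (Multiplicative ℤ)) := by
      rw [hs, map_mul]
      have h1 : Valued.v (HahnSeries.single ((a:ℕ):ℤ) (1:ZMod p)) ≤ 1 := by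
        rw [LaurentSeries.valuation_single_zpow]
        rw [← WithZero.coe_one, ← ofAdd_zero, ← WithZero.exp_eq_coe_ofAdd, WithZero.exp_le_exp]
        omega
      calc Valued.v (HahnSeries.single ((a:ℕ):ℤ) (1:ZMod p)) *
            Valued.v (1 + HahnSeries.single (1:ℤ) c : K) ≤ 1 * 1 :=
              mul_le_mul' h1 (val_one_add_single_le p c)
        _ = 1 := by rw [mul_one]
    obtain ⟨y, hyV, hy⟩ := hV s hsv
    refine ⟨y, hyV, ?_⟩
    set j : ℤ := v₀ + (a:ℤ)*k₀ + (p^e:ℕ)*r with hj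
    have hco := hasSum_coeff p hy j
    have hzero : ∀ d : ℕ, d ≠ k₀ → (b d * s ^ d).coeff j = 0 := by
      intro d hd
      rcases lt_or_gt_of_ne hd with hlt | hgt
      · rw [hmin d hlt]; simp
      · by_cases hbd : b d = 0
        · simp [hbd]
        · apply HahnSeries.coeff_eq_zero_of_lt_order
          have hordmul : (b d * s ^ d).order = (b d).order + (d : ℕ) • s.order := by
            rw [HahnSeries.order_mul hbd (pow_ne_zero _ hsne), HahnSeries.order_pow]
          rw [hordmul, hsord]
          have hOrd := horder d hbd
          have hGrow := hagrow d hgt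
          have hsm : (d : ℕ) • ((a:ℕ):ℤ) = ((a:ℕ):ℤ) * (d:ℤ) := by
            rw [nsmul_eq_mul]; ring
          rw [hsm]
          have hrle : ((p^e:ℕ):ℤ) * (r:ℤ) ≤ ((p^e:ℕ):ℤ) := by
            have hr1 : (r:ℤ) ≤ 1 := by exact_mod_cast hr
            have hpe0 : (0:ℤ) ≤ ((p^e:ℕ):ℤ) := by positivity
            nlinarith
          rw [hj]
          omega
    have hyj : y.coeff j = (b k₀ * s ^ k₀).coeff j :=
      ((hasSum_single k₀ hzero).unique hco).symm
    rw [hyj]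
    -- expand s ^ k₀
    have hpow : s ^ k₀ = ∑ m ∈ Finset.range (u+1),
        HahnSeries.single (((a:ℕ):ℤ)*(k₀:ℤ) + ((p^e:ℕ):ℤ)*(m:ℤ))
          ((c^(p^e))^m * (u.choose m : ZMod p)) := by
      have h1 : s ^ k₀ = HahnSeries.single (((a:ℕ):ℤ)*(k₀:ℤ)) 1 *
          ((1 + HahnSeries.single (1:ℤ) c) ^ (p^e)) ^ u := by
        rw [hs, mul_pow, ← pow_mul, hpu]
        congr 1
        rw [HahnSeries.single_pow, one_pow]
        congr 1
        rw [nsmul_eq_mul]; ring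
      rw [h1, add_pow_char_pow, one_pow, HahnSeries.single_pow, add_comm
        (1 : K), add_pow, Finset.mul_sum]
      refine Finset.sum_congr rfl (fun m hm => ?_)
      rw [one_pow, mul_one, HahnSeries.single_pow]
      rw [show ((u.choose m : ℕ) : K) = HahnSeries.single (0:ℤ) ((u.choose m : ZMod p)) from by
        rw [← HahnSeries.C_apply, map_natCast]]
      rw [HahnSeries.single_mul_single, HahnSeries.single_mul_single]
      congr 1
      · push_cast [nsmul_eq_mul]
        ring
      · ring
    rw [hpow, Finset.mul_sum]
    have hcs : (∑ m ∈ Finset.range (u+1), b k₀ *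
        HahnSeries.single (((a:ℕ):ℤ)*(k₀:ℤ) + ((p^e:ℕ):ℤ)*(m:ℤ))
          ((c^(p^e))^m * (u.choose m : ZMod p))).coeff j
        = ∑ m ∈ Finset.range (u+1), (b k₀ *
        HahnSeries.single (((a:ℕ):ℤ)*(k₀:ℤ) + ((p^e:ℕ):ℤ)*(m:ℤ))
          ((c^(p^e))^m * (u.choose m : ZMod p))).coeff j :=
      map_sum (coeffHom p j) _ _
    rw [hcs]
    have hterm : ∀ m : ℕ, (b k₀ *
        HahnSeries.single (((a:ℕ):ℤ)*(k₀:ℤ) + ((p^e:ℕ):ℤ)*(m:ℤ))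
          ((c^(p^e))^m * (u.choose m : ZMod p))).coeff j
        = (b k₀).coeff (v₀ + ((p^e:ℕ):ℤ)*r - ((p^e:ℕ):ℤ)*m) *
            ((c^(p^e))^m * (u.choose m : ZMod p)) := by
      intro m
      rw [coeff_mul_single]
      congr 2
      rw [hj]; ring
    rw [Finset.sum_congr rfl (fun m _ => hterm m)]
    refine (Finset.sum_subset (Finset.range_subset_range.mpr (by omega)) ?_).symm
    intro m hm hnm
    have hmr : (r:ℤ) < (m:ℤ) := by
      simp only [Finset.mem_range, not_lt] at hnm
      exact_mod_cast hnm
    have hidx : v₀ + ((p^e:ℕ):ℤ)*r - ((p^e:ℕ):ℤ)*m < v₀ := by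
      have hpe0 : (1:ℤ) ≤ ((p^e:ℕ):ℤ) := by exact_mod_cast hpe1
      nlinarith
    rw [hv₀] at hidx
    rw [HahnSeries.coeff_eq_zero_of_lt_order hidx, zero_mul]
  -- Step 1 : divisibility of v₀ + a k₀
  obtain ⟨y₀, hy₀V, hy₀c⟩ := key 0 0 (by omega)
  have h1 : y₀.coeff (v₀ + (a:ℤ)*k₀ + (p^e:ℕ)*((0:ℕ):ℤ)) = lam := by
    rw [hy₀c]
    simp [hlam']
  have hdiv0 : (ℓ:ℤ) ∣ (v₀ + (a:ℤ)*k₀) := by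
    have hd := hy₀V _ (by rw [h1]; exact hlam)
    simpa using hd
  -- Step 2 : the equation for every c
  have h2 : ∀ c : ZMod p,
      (b k₀).coeff (v₀ + ((p^e:ℕ):ℤ)) + lam * ((c^(p^e)) * (u : ZMod p)) = 0 := by
    intro c
    obtain ⟨y, hyV, hyc⟩ := key c 1 le_rfl
    have hcoeff0 : y.coeff (v₀ + (a:ℤ)*k₀ + (p^e:ℕ)*((1:ℕ):ℤ)) = 0 := by
      by_contra hne
      have hdiv := hyV _ hne
      have hsub := dvd_sub hdiv hdiv0
      have heq : (v₀ + (a:ℤ)*k₀ + ((p^e:ℕ):ℤ)*((1:ℕ):ℤ)) - (v₀ + (a:ℤ)*k₀) = ((p^e:ℕ):ℤ) := by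
        push_cast; ring
      rw [heq] at hsub
      have hdvdn : ℓ ∣ p^e := Int.ofNat_dvd.mp (by exact_mod_cast hsub)
      have hl1 : ℓ = 1 := Nat.Coprime.eq_one_of_dvd ((hcop.pow_left e).symm) hdvdn
      omega
    rw [hcoeff0] at hyc
    have hyc' := hyc.symm
    rw [Finset.sum_range_succ, Finset.sum_range_one] at hyc'
    have hi0 : v₀ + ((p^e:ℕ):ℤ)*((1:ℕ):ℤ) - ((p^e:ℕ):ℤ)*((0:ℕ):ℤ) = v₀ + ((p^e:ℕ):ℤ) := by
      push_cast; ring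
    have hi1 : v₀ + ((p^e:ℕ):ℤ)*((1:ℕ):ℤ) - ((p^e:ℕ):ℤ)*((1:ℕ):ℤ) = v₀ := by ring
    rw [hi0, hi1] at hyc'
    simp only [pow_zero, pow_one, Nat.choose_zero_right, Nat.choose_one_right,
      Nat.cast_one, one_mul, mul_one] at hyc'
    rw [← hlam'] at hyc'
    linear_combination hyc'
  -- conclusion
  have hA : (b k₀).coeff (v₀ + ((p^e:ℕ):ℤ)) = 0 := by
    have := h2 0
    rw [zero_pow (by positivity), zero_mul, mul_zero, add_zero] at this
    exact this
  have hB := h2 1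
  rw [hA, one_pow, one_mul, zero_add] at hB
  rcases mul_eq_zero.mp hB with h | h
  · exact hlam h
  · exact hu ((ZMod.natCast_eq_zero_iff u p).mp h)

lemma isOpen_ball (x : LaurentSeries (ZMod p)) (g : (WithZero (Multiplicative ℤ))ˣ) :
    IsOpen {y : LaurentSeries (ZMod p) | Valued.v (y - x) < (g : WithZero (Multiplicative ℤ))} := by
  rw [isOpen_iff_mem_nhds]
  intro y hy
  rw [Valued.mem_nhds]
  have hgz : Valued.v (HahnSeries.single (-WithZero.log (g : WithZero (Multiplicative ℤ)))
      (1 : ZMod p) : LaurentSeries (ZMod p)) = g := by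
    rw [LaurentSeries.valuation_single_zpow, neg_neg, WithZero.exp_log g.ne_zero]
  have hz0 : Valued.v.restrict (HahnSeries.single (-WithZero.log (g : WithZero (Multiplicative ℤ)))
      (1 : ZMod p) : LaurentSeries (ZMod p)) ≠ 0 := by
    rw [← pos_iff_ne_zero, Valuation.restrict_pos_iff, hgz]
    exact Units.zero_lt g
  refine ⟨Units.mk0 _ hz0, fun w hw' => ?_⟩
  have hw : Valued.v (w - y) < (g : WithZero (Multiplicative ℤ)) := by
    rw [← hgz]; exact (Valuation.restrict_lt_iff _).mp hw'
  have hww : w - x = (w - y) + (y - x) := by ring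
  show Valued.v (w - x) < (g : WithZero (Multiplicative ℤ))
  rw [hww]
  exact Valuation.map_add_lt _ hw hy

end AuxPSXl

/-- for every `n ∈ ℕ`, every open `U ⊆ K^n` and every `K`-analytic map
`f : U → K` with `f(U) ⊆ 𝔽[[X^ℓ]]`, the map `f` is locally constant; thus `𝔽[[X^ℓ]]` is
a constancy-enforcing subset of `K`. -/
theorem analytic_map_into_powerSeriesInXl_locally_constant_multivariable
    (ℓ : ℕ) (hℓ : 2 ≤ ℓ) (hcop : Nat.Coprime p ℓ)
    (n : ℕ) (U : Set (Fin n → LaurentSeries (ZMod p))) (hU : IsOpen U)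
    (f : (Fin n → LaurentSeries (ZMod p)) → LaurentSeries (ZMod p))
    (hf : AnalyticOnOpen p n U f)
    (hfH : ∀ z ∈ U, f z ∈ powerSeriesInXl p ℓ) :
    ∀ z₀ ∈ U, ∃ t : Set (Fin n → LaurentSeries (ZMod p)),
      IsOpen t ∧ z₀ ∈ t ∧ t ⊆ U ∧ ∀ z ∈ t, f z = f z₀ := by
  classical
  intro z₀ hz₀
  obtain ⟨A, t, ht_open, ht0, htU, hsum⟩ := hf z₀ hz₀
  obtain ⟨I, uset, h1, h2⟩ := isOpen_pi_iff.mp ht_open z₀ ht0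
  have hball : ∀ i : Fin n, ∃ g : (WithZero (Multiplicative ℤ))ˣ,
      i ∈ I → {y : LaurentSeries (ZMod p) |
        Valued.v (y - z₀ i) < (g : WithZero (Multiplicative ℤ))} ⊆ uset i := by
    intro i
    by_cases hi : i ∈ I
    · obtain ⟨g, hg⟩ := Valued.mem_nhds.mp ((h1 i hi).1.mem_nhds ((h1 i hi).2))
      exact ⟨Units.mk0 (MonoidWithZeroHom.ValueGroup₀.embedding g.1)
        (fun h => g.ne_zero (MonoidWithZeroHom.ValueGroup₀.embedding_injective
          (h.trans (map_zero _).symm))),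
        fun _ y hy => hg ((Valuation.restrict_lt_iff_lt_embedding _).mpr hy)⟩
    · exact ⟨1, fun h => absurd h hi⟩
  choose gf hgf using hball
  set P : Set (Fin n → LaurentSeries (ZMod p)) :=
    Set.pi ↑I (fun i => {y | Valued.v (y - z₀ i) < (gf i : WithZero (Multiplicative ℤ))}) with hP
  have hPopen : IsOpen P :=
    isOpen_set_pi I.finite_toSet (fun i _ => AuxPSXl.isOpen_ball p (z₀ i) (gf i))
  have hz₀P : z₀ ∈ P := by
    intro i _
    show Valued.v (z₀ i - z₀ i) < (gf i : WithZero (Multiplicative ℤ))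
    rw [sub_self, map_zero]
    exact Units.zero_lt (gf i)
  have hPt : P ⊆ t := fun w hw => h2 (fun i hi => (hgf i hi) (hw i hi))
  refine ⟨P, hPopen, hz₀P, fun w hw => htU (hPt hw), ?_⟩
  intro z hz
  set Δ : Fin n → LaurentSeries (ZMod p) := fun i => z i - z₀ i with hΔ
  have hmem : ∀ s : LaurentSeries (ZMod p), Valued.v s ≤ 1 →
      (fun i => z₀ i + s * Δ i) ∈ P := by
    intro s hs i hi
    show Valued.v (z₀ i + s * Δ i - z₀ i) < (gf i : WithZero (Multiplicative ℤ))
    rw [add_sub_cancel_left, map_mul]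
    refine lt_of_le_of_lt ?_ (hz i hi)
    calc Valued.v s * Valued.v (Δ i) ≤ 1 * Valued.v (Δ i) := mul_le_mul_left hs _
      _ = Valued.v (Δ i) := one_mul _
  haveI hFT : ∀ d : ℕ, Fintype {α : Fin n → ℕ // (∑ i, α i) = d} := fun d =>
    Fintype.ofFinset (Finset.Nat.antidiagonalTuple n d)
      (fun α => Finset.Nat.mem_antidiagonalTuple)
  set b : ℕ → LaurentSeries (ZMod p) := fun d =>
    ∑ α ∈ Finset.Nat.antidiagonalTuple n d, A α * ∏ i, Δ i ^ α i with hb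
  have claimA : ∀ s : LaurentSeries (ZMod p), Valued.v s ≤ 1 →
      HasSum (fun d => b d * s ^ d) (f (fun i => z₀ i + s * Δ i)) := by
    intro s hs
    have hsum' := hsum _ (hPt (hmem s hs))
    have hterm : (fun α : Fin n → ℕ =>
        A α * ∏ i, ((fun i => z₀ i + s * Δ i) i - z₀ i) ^ α i)
        = fun α => (A α * ∏ i, Δ i ^ α i) * s ^ (∑ i, α i) := by
      funext α
      simp only [add_sub_cancel_left]
      rw [Finset.prod_congr rfl (fun i _ => mul_pow s (Δ i) (α i)),
        Finset.prod_mul_distrib, Finset.prod_pow_eq_pow_sum]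
      ring
    rw [hterm] at hsum'
    have hσ : HasSum ((fun α : Fin n → ℕ => (A α * ∏ i, Δ i ^ α i) * s ^ (∑ i, α i)) ∘
        (Equiv.sigmaFiberEquiv (fun α : Fin n → ℕ => ∑ i, α i)))
        (f (fun i => z₀ i + s * Δ i)) :=
      (Equiv.sigmaFiberEquiv _).hasSum_iff.mpr hsum'
    refine HasSum.sigma hσ ?_
    intro d
    have h1' : (fun c : {α : Fin n → ℕ // (∑ i, α i) = d} =>
        ((fun α : Fin n → ℕ => (A α * ∏ i, Δ i ^ α i) * s ^ (∑ i, α i)) ∘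
          (Equiv.sigmaFiberEquiv (fun α : Fin n → ℕ => ∑ i, α i))) ⟨d, c⟩)
        = fun c => (A c.1 * ∏ i, Δ i ^ c.1 i) * s ^ d := by
      funext c
      show (A c.1 * ∏ i, Δ i ^ c.1 i) * s ^ (∑ i, c.1 i)
        = (A c.1 * ∏ i, Δ i ^ c.1 i) * s ^ d
      rw [c.2]
    rw [h1']
    have h3 : b d * s ^ d = ∑ c : {α : Fin n → ℕ // (∑ i, α i) = d},
        (A c.1 * ∏ i, Δ i ^ c.1 i) * s ^ d := by
      rw [hb, Finset.sum_mul]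
      exact Finset.sum_subtype _ (fun α => Finset.Nat.mem_antidiagonalTuple)
        (fun α => (A α * ∏ i, Δ i ^ α i) * s ^ d)
    rw [h3]
    exact hasSum_fintype _
  have hb0 : b 0 = f z₀ := by
    have h0 := claimA 0 (by rw [map_zero]; exact zero_le')
    have h0' : (fun d => b d * (0 : LaurentSeries (ZMod p)) ^ d)
        = (fun d => if d = 0 then b 0 else 0) := by
      funext d
      rcases d with _ | d
      · simp
      · simp
    rw [h0'] at h0
    have heq := (hasSum_ite_eq 0 (b 0)).unique h0
    have hzz : (fun i => z₀ i + (0 : LaurentSeries (ZMod p)) * Δ i) = z₀ := by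
      funext i; simp
    rwa [hzz] at heq
  set b' : ℕ → LaurentSeries (ZMod p) := Function.update b 0 0 with hb'
  have hcore : ∀ d, b' d = 0 := by
    refine AuxPSXl.core p ℓ hℓ hcop b' (Function.update_self 0 0 b) ?_
    intro s hs
    refine ⟨f (fun i => z₀ i + s * Δ i) - f z₀, ?_, ?_⟩
    · intro j hj
      rw [HahnSeries.coeff_sub] at hj
      by_cases hw : (f (fun i => z₀ i + s * Δ i)).coeff j = 0
      · have hz' : (f z₀).coeff j ≠ 0 := by
          intro h0; rw [hw, h0] at hj; simp at hj
        obtain ⟨k, hk⟩ := hfH z₀ hz₀ j hz'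
        exact ⟨k, by exact_mod_cast hk⟩
      · obtain ⟨k, hk⟩ := hfH _ (htU (hPt (hmem s hs))) j hw
        exact ⟨k, by exact_mod_cast hk⟩
    · have hA := claimA s hs
      have hB : HasSum (fun d : ℕ => if d = 0 then f z₀ else 0) (f z₀) :=
        hasSum_ite_eq 0 (f z₀)
      have hC := hA.sub hB
      have hfun : (fun d => b' d * s ^ d)
          = fun d => b d * s ^ d - (if d = 0 then f z₀ else 0) := by
        funext d
        by_cases hd : d = 0
        · subst hd
          simp [hb', Function.update_self, hb0]
        · simp [hb', Function.update_of_ne hd, hd]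
      rw [hfun]
      exact hC
  have hd0 : ∀ d, d ≠ 0 → b d = 0 := by
    intro d hd
    have := hcore d
    rwa [hb', Function.update_of_ne hd] at this
  have h1 := claimA 1 (by rw [map_one])
  have heq : (fun d => b d * (1 : LaurentSeries (ZMod p)) ^ d)
      = (fun d : ℕ => if d = 0 then f z₀ else 0) := by
    funext d
    by_cases hd : d = 0
    · subst hd; simp [hb0]
    · simp [hd, hd0 d hd]
  rw [heq] at h1
  have hfz := (hasSum_ite_eq 0 (f z₀)).unique h1
  have hzz : (fun i => z₀ i + (1 : LaurentSeries (ZMod p)) * Δ i) = z := by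
    funext i; simp [hΔ]
  rw [hzz] at hfz
  exact hfz.symm
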